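/- arXiv:1604.03448 — 2 statements merged into one kernel-verified Lean document; each statement's English description precedes it below -/
import Mathlib

section
/- Non-lockability of the max-relative entropy of entanglement: For any tripartite density matrix ρ_{ABB'} on ℂ^{d_A} ⊗ ℂ^{d_B} ⊗ ℂ^{d_{B'}}, one has E_max^{A:BB'}(ρ_{ABB'}) − E_max^{A:B}(ρ_{AB}) ≤ 2·log₂(d_{B'}), where ρ_{AB} = tr_{B'}(ρ_{ABB'}) is the partial trace over the B' system, E_max^{A:BB'} is taken w.r.t. the bipartition A : BB', and E_max^{A:B} w.r.t. A : B. -/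
open Matrix
open scoped Kronecker ComplexOrder
attribute [local instance] Classical.propDecidable

noncomputable section

/-- Real power of a Hermitian matrix via the continuous functional calculus
(with the Moore–Penrose convention `0 ^ r = 0` for `r ≠ 0`). -/
def matRPow {n : Type*} [Fintype n] [DecidableEq n] (A : Matrix n n ℂ) (r : ℝ) :
    Matrix n n ℂ :=
  cfc (fun x : ℝ => x ^ r) A

/-- Base-2 matrix logarithm via the continuous functional calculus. -/
def matLog2 {n : Type*} [Fintype n] [DecidableEq n] (A : Matrix n n ℂ) : Matrix n n ℂ :=
  cfc (fun x : ℝ => Real.logb 2 x) A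

/-- A density matrix: positive semidefinite with unit trace. -/
def IsState {n : Type*} [Fintype n] (ρ : Matrix n n ℂ) : Prop :=
  ρ.PosSemidef ∧ ρ.trace = 1

/-- The sandwiched α-Rényi divergence
`D_α(ρ‖σ) = (α−1)⁻¹ · log₂ tr[(σ^((1−α)/(2α)) ρ σ^((1−α)/(2α)))^α]`. -/
def sandwichedRenyi {n : Type*} [Fintype n] [DecidableEq n] (α : ℝ) (ρ σ : Matrix n n ℂ) : ℝ :=
  (α - 1)⁻¹ *
    Real.logb 2
      (matRPow (matRPow σ ((1 - α) / (2 * α)) * ρ * matRPow σ ((1 - α) / (2 * α))) α).trace.re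

/-- The Umegaki relative entropy `D(ρ‖σ) = tr[ρ log₂ ρ] − tr[ρ log₂ σ]`. -/
def relEnt {n : Type*} [Fintype n] [DecidableEq n] (ρ σ : Matrix n n ℂ) : ℝ :=
  ((ρ * matLog2 ρ).trace - (ρ * matLog2 σ).trace).re

/-- The max-relative entropy `D_max(ρ‖σ) = log₂ inf{c > 0 : c·σ − ρ ⪰ 0}` (with value `⊤`
if no such `c` exists). -/
def Dmax {n : Type*} [Fintype n] (ρ σ : Matrix n n ℂ) : EReal :=
  ⨅ c : {c : ℝ // 0 < c ∧ ((c : ℝ) • σ - ρ).PosSemidef}, ((Real.logb 2 (c : ℝ) : ℝ) : EReal)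

/-- Support inclusion for positive semidefinite matrices, expressed as domination:
`supp ρ ⊆ supp σ` iff `ρ ≤ c·σ` for some `c > 0`. -/
def supportLe {n : Type*} [Fintype n] (ρ σ : Matrix n n ℂ) : Prop :=
  ∃ c : ℝ, 0 < c ∧ ((c : ℝ) • σ - ρ).PosSemidef

/-- Extended-real-valued sandwiched α-Rényi divergence, `⊤` if the support condition fails. -/
def DalphaE {n : Type*} [Fintype n] [DecidableEq n] (α : ℝ) (ρ σ : Matrix n n ℂ) : EReal :=
  if supportLe ρ σ then ((sandwichedRenyi α ρ σ : ℝ) : EReal) else ⊤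

/-- Extended-real-valued Umegaki relative entropy, `⊤` if the support condition fails. -/
def DrelE {n : Type*} [Fintype n] [DecidableEq n] (ρ σ : Matrix n n ℂ) : EReal :=
  if supportLe ρ σ then ((relEnt ρ σ : ℝ) : EReal) else ⊤

/-- Separability of a bipartite state w.r.t. the bipartition given by the product index. -/
def IsSepState {A B : Type*} [Fintype A] [Fintype B]
    (σ : Matrix (A × B) (A × B) ℂ) : Prop :=
  ∃ (k : ℕ) (p : Fin k → ℝ) (τ₁ : Fin k → Matrix A A ℂ) (τ₂ : Fin k → Matrix B B ℂ),
    (∀ i, 0 ≤ p i) ∧ (∑ i, p i = 1) ∧ (∀ i, IsState (τ₁ i)) ∧ (∀ i, IsState (τ₂ i)) ∧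
      σ = ∑ i, (p i : ℂ) • (τ₁ i ⊗ₖ τ₂ i)

/-- The max-relative entropy of entanglement of a bipartite state. -/
def EmaxState {A B : Type*} [Fintype A] [Fintype B]
    (ρ : Matrix (A × B) (A × B) ℂ) : EReal :=
  ⨅ σ : {σ : Matrix (A × B) (A × B) ℂ // IsSepState σ}, Dmax ρ (σ : Matrix (A × B) (A × B) ℂ)

/-- The α-relative entropy of entanglement of a bipartite state. -/
def EalphaState {A B : Type*} [Fintype A] [Fintype B] [DecidableEq A] [DecidableEq B]
    (α : ℝ) (ρ : Matrix (A × B) (A × B) ℂ) : EReal :=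
  ⨅ σ : {σ : Matrix (A × B) (A × B) ℂ // IsSepState σ}, DalphaE α ρ (σ : Matrix (A × B) (A × B) ℂ)

/-- The relative entropy of entanglement of a bipartite state. -/
def ERState {A B : Type*} [Fintype A] [Fintype B] [DecidableEq A] [DecidableEq B]
    (ρ : Matrix (A × B) (A × B) ℂ) : EReal :=
  ⨅ σ : {σ : Matrix (A × B) (A × B) ℂ // IsSepState σ}, DrelE ρ (σ : Matrix (A × B) (A × B) ℂ)

/-- Partial application `id_R ⊗ T` of a map `T` to the second tensor factor. -/
def applyRight {R A B : Type*} (T : Matrix A A ℂ → Matrix B B ℂ)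
    (ρ : Matrix (R × A) (R × A) ℂ) : Matrix (R × B) (R × B) ℂ :=
  Matrix.of fun x y => T (Matrix.of fun a a' => ρ (x.1, a) (y.1, a')) x.2 y.2

/-- Partial application `id_R ⊗ T ⊗ id_S` of a map `T` to the middle tensor factor. -/
def applyMiddle {R A B S : Type*} (T : Matrix A A ℂ → Matrix B B ℂ)
    (ρ : Matrix (R × A × S) (R × A × S) ℂ) : Matrix (R × B × S) (R × B × S) ℂ :=
  Matrix.of fun x y => T (Matrix.of fun a a' => ρ (x.1, a, x.2.2) (y.1, a', y.2.2)) x.2.1 y.2.1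

/-- Regroup a tripartite index `A × (B × C)` as `(A × B) × C`. -/
def assocL {A B C : Type*} (ρ : Matrix (A × B × C) (A × B × C) ℂ) :
    Matrix ((A × B) × C) ((A × B) × C) ℂ :=
  ρ.submatrix (Equiv.prodAssoc A B C) (Equiv.prodAssoc A B C)

/-- The (normalized) Choi matrix `(id ⊗ T)(ω)` of a linear map `T`. -/
def choi {A B : Type*} [Fintype A] [DecidableEq A] (T : Matrix A A ℂ → Matrix B B ℂ) :
    Matrix (A × B) (A × B) ℂ :=
  Matrix.of fun x y => ((Fintype.card A : ℂ))⁻¹ * T (Matrix.single x.1 y.1 1) x.2 y.2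

/-- A quantum channel: linear, trace-preserving and completely positive
(the latter expressed by positive semidefiniteness of the Choi matrix). -/
def IsQChannel {A B : Type*} [Fintype A] [Fintype B] [DecidableEq A]
    (T : Matrix A A ℂ → Matrix B B ℂ) : Prop :=
  IsLinearMap ℂ T ∧ (∀ X, (T X).trace = X.trace) ∧ (choi T).PosSemidef

/-- The max-relative entropy of entanglement of a quantum channel:
`E_max(T) = sup {E_max^{R:B}((id_R ⊗ T)(ρ)) : ρ a state on R ⊗ A, dim R arbitrary}`. -/
def EmaxChan {A B : Type*} [Fintype A] [Fintype B]
    (T : Matrix A A ℂ → Matrix B B ℂ) : EReal :=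
  ⨆ (dR : ℕ) (ρ : {ρ : Matrix (Fin dR × A) (Fin dR × A) ℂ // IsState ρ}),
    EmaxState (applyRight T (ρ : Matrix (Fin dR × A) (Fin dR × A) ℂ))

/-- Partial trace over the second tensor factor. -/
def ptraceSnd {B C : Type*} [Fintype C] (M : Matrix (B × C) (B × C) ℂ) : Matrix B B ℂ :=
  Matrix.of fun b b' => ∑ c : C, M (b, c) (b', c)

/-- Partial trace over the third tensor factor. -/
def ptraceThird {A B C : Type*} [Fintype C] (ρ : Matrix (A × B × C) (A × B × C) ℂ) :
    Matrix (A × B) (A × B) ℂ :=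
  Matrix.of fun x y => ∑ c : C, ρ (x.1, x.2, c) (y.1, y.2, c)

/-- Tensoring with the identity on a third factor: `M ⊗ I_C` on `A ⊗ B ⊗ C`. -/
def tensorId3 {A B C : Type*} [DecidableEq C] [Fintype C] (M : Matrix (A × B) (A × B) ℂ) :
    Matrix (A × B × C) (A × B × C) ℂ :=
  (M ⊗ₖ (1 : Matrix C C ℂ)).submatrix (Equiv.prodAssoc A B C).symm (Equiv.prodAssoc A B C).symm

end
noncomputable section

/-- The trace norm `‖M‖₁ = tr[(M†M)^{1/2}]`. -/
def traceNorm {n : Type*} [Fintype n] [DecidableEq n] (M : Matrix n n ℂ) : ℝ :=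
  (matRPow (Mᴴ * M) (1 / 2 : ℝ)).trace.re

/-- The weighted trace norm `‖X‖_{1,τ} = tr|τ^{1/2} X τ^{1/2}|`. -/
def wnorm1 {n : Type*} [Fintype n] [DecidableEq n] (τ X : Matrix n n ℂ) : ℝ :=
  traceNorm (matRPow τ (1 / 2 : ℝ) * X * matRPow τ (1 / 2 : ℝ))

/-- The spectral (operator) norm of a matrix, as the operator norm of the induced
linear map on Euclidean space. -/
def specNorm {n : Type*} [Fintype n] [DecidableEq n] (M : Matrix n n ℂ) : ℝ :=
  ‖LinearMap.toContinuousLinearMap (Matrix.toEuclideanLin M)‖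

/-- The `d × d` quantum Fourier transform, `(U)_{jk} = e^{2πi jk/d}/√d` for `j,k ∈ {1,…,d}`. -/
def fourierMat (d : ℕ) : Matrix (Fin d) (Fin d) ℂ :=
  Matrix.of fun j k =>
    Complex.exp (2 * (Real.pi : ℂ) * Complex.I * ((((j : ℕ) : ℂ) + 1) * (((k : ℕ) : ℂ) + 1))
        / (d : ℂ)) / ((Real.sqrt d : ℝ) : ℂ)

/-- `U_1 = 1` and `U_2` the quantum Fourier transform. -/
def flowerU (d : ℕ) : Fin 2 → Matrix (Fin d) (Fin d) ℂ :=
  fun l => if l = 0 then 1 else fourierMat d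

/-- The flower state `ρ^f = (1/2d) Σ_{i,k} Σ_{j,l} ⟨k|U_l† U_j|i⟩ |ii⟩⟨kk|_{AB} ⊗ |jj⟩⟨ll|_{A'B'}`,
written on the index `(A × A') × (B × B')` (input system times output system). -/
def flowerState (d : ℕ) :
    Matrix ((Fin d × Fin 2) × (Fin d × Fin 2)) ((Fin d × Fin 2) × (Fin d × Fin 2)) ℂ :=
  Matrix.of fun x y =>
    if x.2.1 = x.1.1 ∧ x.2.2 = x.1.2 ∧ y.2.1 = y.1.1 ∧ y.2.2 = y.1.2 then
      (1 / (2 * (d : ℂ))) * (((flowerU d y.1.2)ᴴ * flowerU d x.1.2) y.1.1 x.1.1)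
    else 0

/-- `p = 1/(√d + 1)`. -/
def pparam (d : ℕ) : ℝ := 1 / (Real.sqrt d + 1)

/-- `Y = (1/d) Σ_{i,j} u_{ij} |ii⟩⟨jj|` on `ℂ^d_A ⊗ ℂ^d_B`, `u` the QFT entries. -/
def Ymat (d : ℕ) : Matrix (Fin d × Fin d) (Fin d × Fin d) ℂ :=
  Matrix.of fun x y =>
    if x.1 = x.2 ∧ y.1 = y.2 then (1 / (d : ℂ)) * fourierMat d x.1 y.1 else 0

/-- The blocks of the separable comparison Choi matrix `C_S`, indexed by the `A'B'` qubit pair. -/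
def CSblock (d : ℕ) (i j : Fin 2 × Fin 2) : Matrix (Fin d × Fin d) (Fin d × Fin d) ℂ :=
  if i = j then
    if i = (0, 1) then ((2 * pparam d : ℝ) : ℂ) • matRPow (Ymat d * (Ymat d)ᴴ) (1 / 2 : ℝ)
    else if i = (1, 0) then ((2 * pparam d : ℝ) : ℂ) • matRPow ((Ymat d)ᴴ * Ymat d) (1 / 2 : ℝ)
    else (((1 - pparam d) / (d ^ 2 : ℝ) : ℝ) : ℂ) • (1 : Matrix (Fin d × Fin d) (Fin d × Fin d) ℂ)
  else 0

/-- The separable comparison Choi matrix `C_S` on `ℂ²_{A'} ⊗ ℂ²_{B'} ⊗ ℂ^d_A ⊗ ℂ^d_B`,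
written on the index `(A' × A) × (B' × B)` grouping the bipartition `(A'A) : (B'B)`. -/
def CSmat (d : ℕ) :
    Matrix ((Fin 2 × Fin d) × (Fin 2 × Fin d)) ((Fin 2 × Fin d) × (Fin 2 × Fin d)) ℂ :=
  Matrix.of fun x y =>
    (1 / (2 * (1 + pparam d) : ℝ) : ℂ) *
      CSblock d (x.1.1, x.2.1) (y.1.1, y.2.1) (x.1.2, x.2.2) (y.1.2, y.2.2)

/-- The blocks of the matrix `M` (the partially transposed state), indexed by the `A'B'`
qubit pair. -/
def Mblock (d : ℕ) (i j : Fin 2 × Fin 2) : Matrix (Fin d × Fin d) (Fin d × Fin d) ℂ :=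
  if i = j then
    if i = (0, 1) then ((pparam d : ℝ) : ℂ) • matRPow (Ymat d * (Ymat d)ᴴ) (1 / 2 : ℝ)
    else if i = (1, 0) then ((pparam d : ℝ) : ℂ) • matRPow ((Ymat d)ᴴ * Ymat d) (1 / 2 : ℝ)
    else (((1 - pparam d) / (d ^ 2 : ℝ) : ℝ) : ℂ) • (1 : Matrix (Fin d × Fin d) (Fin d × Fin d) ℂ)
  else if i = (0, 1) ∧ j = (1, 0) then ((pparam d : ℝ) : ℂ) • Ymat d
  else if i = (1, 0) ∧ j = (0, 1) then ((pparam d : ℝ) : ℂ) • (Ymat d)ᴴ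
  else 0

/-- The matrix `M` on `ℂ²_{A'} ⊗ ℂ²_{B'} ⊗ ℂ^d_A ⊗ ℂ^d_B`, written on the index
`(A' × A) × (B' × B)`. -/
def Mmat (d : ℕ) :
    Matrix ((Fin 2 × Fin d) × (Fin 2 × Fin d)) ((Fin 2 × Fin d) × (Fin 2 × Fin d)) ℂ :=
  Matrix.of fun x y =>
    (1 / 2 : ℂ) * Mblock d (x.1.1, x.2.1) (y.1.1, y.2.1) (x.1.2, x.2.2) (y.1.2, y.2.2)

end

/-!
If `σ_AB` is separable with `ρ_AB ≤ c σ_AB`, then `σ_AB ⊗ 1/d` is separable across `A : BB'`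
(`d = d_{B'}`). With `P_c = 1 ⊗ |c⟩⟨c|` on `B'`, the pinching inequality `ρ ≤ d ∑_c P_c ρ P_c`
and `∑_c P_c ρ P_c ≤ ρ_AB ⊗ 1` give `ρ_ABB' ≤ d ρ_AB ⊗ 1 ≤ c d² (σ_AB ⊗ 1/d)`, so
`D_max(ρ_ABB' ‖ σ_AB ⊗ 1/d) ≤ log₂ c + 2 log₂ d`.
-/

open scoped MatrixOrder

section Pinching

variable {R ι : Type*} [Ring R] [PartialOrder R] [StarRing R] [StarOrderedRing R]
  [Algebra ℝ R] [StarModule ℝ R]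

theorem star_sum_mul_mul_sum_le_card_smul_sum {a : R} (ha : 0 ≤ a) (s : Finset ι) (K : ι → R) :
    star (∑ i ∈ s, K i) * a * ∑ i ∈ s, K i ≤ s.card • ∑ i ∈ s, star (K i) * a * K i := by
  set S := ∑ i ∈ s, K i
  set D := ∑ i ∈ s, star (K i) * a * K i
  have hpairs : ∑ i ∈ s, ∑ j ∈ s, star (K i - K j) * a * (K i - K j) =
      (2 : ℝ) • (s.card • D - star S * a * S) := by
    simp only [star_sub, sub_mul, mul_sub, Finset.sum_sub_distrib, Finset.sum_const, S, D,
      star_sum, Finset.sum_mul, Finset.mul_sum]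
    rw [Finset.sum_comm (f := fun i j => star (K j) * a * K i), ← Finset.smul_sum]
    module
  have htwice : 0 ≤ (2 : ℝ) • (s.card • D - star S * a * S) := hpairs ▸
    Finset.sum_nonneg fun i _ => Finset.sum_nonneg fun j _ => star_left_conjugate_nonneg ha _
  rw [← sub_nonneg]
  simpa using smul_nonneg (by norm_num : (0 : ℝ) ≤ 1 / 2) htwice

end Pinching

theorem IsState.nonempty {n : Type*} [Fintype n] {ρ : Matrix n n ℂ} (hρ : IsState ρ) :
    Nonempty n := by
  by_contra h
  rw [not_nonempty_iff] at h
  simpa [Matrix.trace] using hρ.2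

theorem IsState.kronecker {m n : Type*} [Fintype m] [Fintype n] {ρ : Matrix m m ℂ}
    {τ : Matrix n n ℂ} (hρ : IsState ρ) (hτ : IsState τ) : IsState (ρ ⊗ₖ τ) :=
  ⟨hρ.1.kronecker hτ.1, by rw [trace_kronecker, hρ.2, hτ.2, one_mul]⟩

theorem isState_maximallyMixed (n : Type*) [Fintype n] [DecidableEq n] [Nonempty n] :
    IsState ((Fintype.card n : ℝ)⁻¹ • (1 : Matrix n n ℂ)) := by
  refine ⟨PosSemidef.one.smul (by positivity), ?_⟩
  rw [trace_smul, trace_one, Complex.real_smul]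
  push_cast
  exact inv_mul_cancel₀ (by simp)

theorem Dmax_le_logb {n : Type*} [Fintype n] {ρ σ : Matrix n n ℂ} {c : ℝ} (hc : 0 < c)
    (h : ρ ≤ c • σ) : Dmax ρ σ ≤ (Real.logb 2 c : EReal) :=
  iInf_le_of_le ⟨c, hc, h⟩ le_rfl

theorem EmaxState_le_Dmax {A B : Type*} [Fintype A] [Fintype B]
    {ρ σ : Matrix (A × B) (A × B) ℂ} (hσ : IsSepState σ) : EmaxState ρ ≤ Dmax ρ σ :=
  iInf_le_of_le ⟨σ, hσ⟩ le_rfl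

section TensorId3

variable {A B C : Type*} [Fintype C] [DecidableEq C]

variable (C) in
@[simps]
def tensorId3LinearMap : Matrix (A × B) (A × B) ℂ →ₗ[ℂ] Matrix (A × B × C) (A × B × C) ℂ where
  toFun := tensorId3
  map_add' M N := by simp [tensorId3, add_kronecker, submatrix_add]
  map_smul' c M := by simp [tensorId3, smul_kronecker, submatrix_smul]

theorem tensorId3_sub (M N : Matrix (A × B) (A × B) ℂ) :
    tensorId3 (C := C) (M - N) = tensorId3 M - tensorId3 N :=
  map_sub (tensorId3LinearMap C) M N

theorem tensorId3_smul (r : ℝ) (M : Matrix (A × B) (A × B) ℂ) :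
    tensorId3 (C := C) (r • M) = r • tensorId3 M :=
  LinearMap.map_smul_of_tower (tensorId3LinearMap C) r M

theorem tensorId3_kronecker (M : Matrix A A ℂ) (N : Matrix B B ℂ) :
    tensorId3 (C := C) (M ⊗ₖ N) = M ⊗ₖ (N ⊗ₖ 1) := by
  ext ⟨a, b, c⟩ ⟨a', b', c'⟩
  simp [tensorId3, mul_assoc]

theorem tensorId3_mono [Fintype A] [Fintype B] {M N : Matrix (A × B) (A × B) ℂ} (h : M ≤ N) :
    tensorId3 (C := C) M ≤ tensorId3 N := by
  rw [le_iff, ← tensorId3_sub]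
  exact (PosSemidef.kronecker h PosSemidef.one).submatrix _

theorem isSepState_smul_tensorId3 [Fintype A] [Fintype B] [Nonempty C]
    {σ : Matrix (A × B) (A × B) ℂ} (hσ : IsSepState σ) :
    IsSepState (A := A) (B := B × C) ((Fintype.card C : ℝ)⁻¹ • tensorId3 σ) := by
  obtain ⟨k, p, τ₁, τ₂, hp, hsum, hτ₁, hτ₂, rfl⟩ := hσ
  refine ⟨k, p, τ₁, fun i => τ₂ i ⊗ₖ ((Fintype.card C : ℝ)⁻¹ • (1 : Matrix C C ℂ)), hp, hsum,
    hτ₁, fun i => (hτ₂ i).kronecker (isState_maximallyMixed C), ?_⟩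
  rw [← tensorId3LinearMap_apply, map_sum, Finset.smul_sum]
  refine Finset.sum_congr rfl fun i _ => ?_
  simp only [map_smul, tensorId3LinearMap_apply, tensorId3_kronecker, kronecker_smul]
  exact smul_comm _ _ _

end TensorId3

section PartialTrace

variable {A B C : Type*} [DecidableEq A] [DecidableEq B] [Fintype C] [DecidableEq C]

variable (A B) in
def idKronecker (X : Matrix C C ℂ) : Matrix (A × B × C) (A × B × C) ℂ :=
  (1 : Matrix A A ℂ) ⊗ₖ ((1 : Matrix B B ℂ) ⊗ₖ X)

theorem sum_idKronecker_single_self : ∑ c : C, idKronecker A B (single c c 1) = 1 := by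
  ext ⟨a, b, c⟩ ⟨a', b', c'⟩
  simp only [idKronecker, Matrix.sum_apply, kroneckerMap_apply, single_apply, one_apply,
    ite_and, Finset.sum_ite_eq', Finset.mem_univ, if_true, mul_ite, mul_one, mul_zero]
  split_ifs <;> simp_all

variable [Fintype A] [Fintype B]

theorem tensorId3_ptraceThird_eq_sum (ρ : Matrix (A × B × C) (A × B × C) ℂ) :
    tensorId3 (ptraceThird ρ) = ∑ c : C, ∑ e : C,
      star (idKronecker A B (single e c 1)) * ρ * idKronecker A B (single e c 1) := by
  ext ⟨a, b, c⟩ ⟨a', b', c'⟩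
  simp only [tensorId3, ptraceThird, submatrix_apply, Equiv.prodAssoc_symm_apply,
    kroneckerMap_apply, of_apply, one_apply, mul_ite, mul_one, mul_zero, idKronecker,
    Matrix.sum_apply, Matrix.mul_apply, star_apply, single_apply, RCLike.star_def,
    Fintype.sum_prod_type, ite_and, apply_ite (starRingEnd ℂ), map_one, map_zero, ite_mul,
    one_mul, zero_mul, Finset.sum_ite_eq, Finset.sum_ite_eq', Finset.mem_univ, if_true,
    Finset.sum_ite_irrel, Finset.sum_const_zero]
  split_ifs <;> simp_all

theorem le_card_smul_tensorId3_ptraceThird {ρ : Matrix (A × B × C) (A × B × C) ℂ}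
    (hρ : 0 ≤ ρ) : ρ ≤ (Fintype.card C : ℝ) • tensorId3 (ptraceThird ρ) := by
  set E : C → C → Matrix (A × B × C) (A × B × C) ℂ := fun e c => idKronecker A B (single e c 1)
  calc ρ = star (∑ c, E c c) * ρ * ∑ c, E c c := by simp [E, sum_idKronecker_single_self]
    _ ≤ Fintype.card C • ∑ c, star (E c c) * ρ * E c c :=
      star_sum_mul_mul_sum_le_card_smul_sum hρ _ _
    _ ≤ Fintype.card C • ∑ c, ∑ e, star (E e c) * ρ * E e c := by
      gcongr with c
      exact Finset.single_le_sum (f := fun e => star (E e c) * ρ * E e c)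
        (fun e _ => star_left_conjugate_nonneg hρ _) (Finset.mem_univ c)
    _ = (Fintype.card C : ℝ) • tensorId3 (ptraceThird ρ) := by
      rw [tensorId3_ptraceThird_eq_sum, Nat.cast_smul_eq_nsmul]

theorem EmaxState_le_logb_add_of_ptraceThird_le [Nonempty C]
    {ρ : Matrix (A × B × C) (A × B × C) ℂ} (hρ : 0 ≤ ρ) {σ : Matrix (A × B) (A × B) ℂ}
    (hσ : IsSepState σ) {c : ℝ} (hc : 0 < c) (h : ptraceThird ρ ≤ c • σ) :
    EmaxState ρ ≤ ((Real.logb 2 c + 2 * Real.logb 2 (Fintype.card C) : ℝ) : EReal) := by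
  set d : ℝ := (Fintype.card C : ℝ)
  have hd : 0 < d := by positivity
  have hdom : ρ ≤ (c * d ^ 2) • (d⁻¹ • tensorId3 σ) := calc
    ρ ≤ d • tensorId3 (ptraceThird ρ) := le_card_smul_tensorId3_ptraceThird hρ
    _ ≤ d • tensorId3 (c • σ) := smul_le_smul_of_nonneg_left (tensorId3_mono h) hd.le
    _ = (c * d ^ 2) • (d⁻¹ • tensorId3 σ) := by
      rw [tensorId3_smul, smul_smul, smul_smul]
      congr 1
      field_simp
  calc EmaxState ρ ≤ Dmax ρ (d⁻¹ • tensorId3 σ) :=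
        EmaxState_le_Dmax (isSepState_smul_tensorId3 hσ)
    _ ≤ (Real.logb 2 (c * d ^ 2) : EReal) := Dmax_le_logb (by positivity) hdom
    _ = ((Real.logb 2 c + 2 * Real.logb 2 d : ℝ) : EReal) := by
      rw [Real.logb_mul hc.ne' (by positivity), Real.logb_pow, Nat.cast_ofNat]

end PartialTrace

/-- **Non-lockability of the max-relative entropy of entanglement**:
`E_max^{A:BB'}(ρ_{ABB'}) − E_max^{A:B}(ρ_{AB}) ≤ 2·log₂(d_{B'})`. -/
theorem emax_non_lockability
    {dA dB dB' : ℕ}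
    (ρ : Matrix (Fin dA × Fin dB × Fin dB') (Fin dA × Fin dB × Fin dB') ℂ)
    (hρ : IsState ρ) :
    EmaxState ρ - EmaxState (ptraceThird ρ) ≤ ((2 * Real.logb 2 dB' : ℝ) : EReal) := by
  have : Nonempty (Fin dB') := hρ.nonempty.elim fun x => ⟨x.2.2⟩
  refine EReal.sub_le_of_le_add' ?_
  rw [← EReal.sub_le_iff_le_add (.inl (EReal.coe_ne_bot _)) (.inl (EReal.coe_ne_top _))]
  refine le_iInf fun σ => le_iInf fun c => EReal.sub_le_of_le_add ?_
  simpa [Fintype.card_fin] using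
    EmaxState_le_logb_add_of_ptraceThird_le hρ.1.nonneg σ.2 c.2.1 c.2.2
end

section
/- Flower-channel bound: Fix d ∈ ℕ, d ≥ 2. Let U_1 = I_d and let U_2 be the d×d quantum Fourier transform with entries (U_2)_{jk} = e^{2πijk/d}/√d. Define the flower state ρ^f on ℂ^d_A ⊗ ℂ²_{A'} ⊗ ℂ^d_B ⊗ ℂ²_{B'} by ρ^f = (1/(2d)) Σ_{i,k=1}^d Σ_{j,l=1}^2 ⟨k|U_l† U_j|i⟩ · |ii⟩⟨kk|_{AB} ⊗ |jj⟩⟨ll|_{A'B'}. Let T_f : M_{2d}(ℂ) → M_{2d}(ℂ) be the unique linear map (with input system AA' and output system BB') whose Choi matrix equals ρ^f. Then T_f is a quantum channel and E_max(T_f) ≤ 2, where in E_max the output is measured across the bipartition (reference system) : BB'. -/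
open Matrix
open scoped Kronecker ComplexOrder
attribute [local instance] Classical.propDecidable

/-!
Conjugating `ρ^f` by the sign flip `Z = diag(1, -1)` on the qubit `A'` flips the sign of the
blocks of `ρ^f` that are off-diagonal in `A'`, so `2 Δ - ρ^f = Z ρ^f Z ⪰ 0`, where `Δ` is the
`A'`-block-diagonal part of `ρ^f`. As `U_1` and `U_2` are unitary, `Δ` is the Choi matrix of the
completely dephasing channel `D`. Hence `2 D - T_f` is completely positive, and for every input
state `ρ` we get `(id ⊗ T_f)(ρ) ≤ 2 (id ⊗ D)(ρ)`, where `(id ⊗ D)(ρ)` is separable because its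
output part is classical. Thus `E_max(T_f) ≤ log₂ 2 = 1`. Unitarity also makes the partial trace
of `ρ^f` over the output maximally mixed, which is trace preservation.
-/

section Choi

variable {A B : Type*} [Fintype A] [DecidableEq A]

lemma card_mul_choi_apply (L : Matrix A A ℂ → Matrix B B ℂ) (a a' : A) (b b' : B) :
    (Fintype.card A : ℂ) * choi L (a, b) (a', b') = L (single a a' 1) b b' := by
  have : (Fintype.card A : ℂ) ≠ 0 := Nat.cast_ne_zero.mpr (Fintype.card_pos_iff.mpr ⟨a⟩).ne'
  rw [choi, of_apply, ← mul_assoc, mul_inv_cancel₀ this, one_mul]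

lemma apply_eq_card_mul_sum_choi {L : Matrix A A ℂ → Matrix B B ℂ} (hL : IsLinearMap ℂ L)
    (X : Matrix A A ℂ) (b b' : B) :
    L X b b' = Fintype.card A * ∑ a, ∑ a', X a a' * choi L (a, b) (a', b') := by
  have hsingle (a a' : A) : single a a' (X a a') = X a a' • single a a' 1 := by
    rw [smul_single, smul_eq_mul, mul_one]
  let l := IsLinearMap.mk' L hL
  change l X b b' = _
  conv_lhs => rw [X.matrix_eq_sum_single]
  simp only [map_sum, Matrix.sum_apply, hsingle, map_smul, Matrix.smul_apply, smul_eq_mul,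
    Finset.mul_sum, mul_left_comm _ (X _ _), card_mul_choi_apply]
  rfl

lemma trace_apply_of_ptraceSnd_choi [Fintype B] {L : Matrix A A ℂ → Matrix B B ℂ}
    (hL : IsLinearMap ℂ L) (h : ptraceSnd (choi L) = (Fintype.card A : ℂ)⁻¹ • 1)
    (X : Matrix A A ℂ) : (L X).trace = X.trace := by
  have hpt (a a' : A) :
      ∑ b, choi L (a, b) (a', b) = (Fintype.card A : ℂ)⁻¹ * (1 : Matrix A A ℂ) a a' := by
    simpa [ptraceSnd] using congrFun (congrFun h a) a'
  calc (L X).trace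
      = ∑ a, ∑ a', X a a' * (Fintype.card A * ∑ b, choi L (a, b) (a', b)) := by
        simp only [trace, diag_apply, apply_eq_card_mul_sum_choi hL, Finset.mul_sum]
        rw [Finset.sum_comm_cycle, Finset.sum_comm_cycle]
        refine Finset.sum_congr rfl fun _ _ => Finset.sum_congr rfl fun _ _ =>
          Finset.sum_congr rfl fun _ _ => by ring
    _ = X.trace := by
        simp only [hpt, one_apply, mul_ite, mul_one, mul_zero, Finset.sum_ite_eq, Finset.mem_univ,
          if_true, trace, diag_apply]
        refine Finset.sum_congr rfl fun a _ => ?_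
        rw [mul_inv_cancel₀ (Nat.cast_ne_zero.mpr (Fintype.card_pos_iff.mpr ⟨a⟩).ne'), mul_one]

open scoped MatrixOrder in
lemma posSemidef_applyRight {R : Type*} [Fintype R] [Fintype B] {L : Matrix A A ℂ → Matrix B B ℂ}
    (hL : IsLinearMap ℂ L) (hC : (choi L).PosSemidef) {ρ : Matrix (R × A) (R × A) ℂ}
    (hρ : ρ.PosSemidef) : (applyRight L ρ).PosSemidef := by
  obtain ⟨M, rfl⟩ := CStarAlgebra.nonneg_iff_eq_star_mul_self.mp hρ.nonneg
  obtain ⟨N, hN⟩ := CStarAlgebra.nonneg_iff_eq_star_mul_self.mp hC.nonneg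
  let K : Matrix ((R × A) × (A × B)) (R × B) ℂ :=
    of fun u y => ∑ a, M u.1 (y.1, a) * N u.2 (a, y.2)
  have hK : applyRight L (star M * M) = (Fintype.card A : ℂ) • (Kᴴ * K) := by
    ext x y
    let F (a a' : A) (s : R × A) (t : A × B) : ℂ :=
      star (M s (x.1, a) * N t (a, x.2)) * (M s (y.1, a') * N t (a', y.2))
    calc applyRight L (star M * M) x y = Fintype.card A * ∑ a, ∑ a', ∑ s, ∑ t, F a a' s t := by
          simp only [applyRight, of_apply, apply_eq_card_mul_sum_choi hL, hN,
            star_eq_conjTranspose, mul_apply, conjTranspose_apply, Finset.sum_mul_sum, F,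
            star_mul']
          congr! 5
          ring
      _ = Fintype.card A * ∑ s, ∑ t, ∑ a, ∑ a', F a a' s t := by
          rw [Finset.sum_comm_cycle]
          exact congrArg _ (Finset.sum_congr rfl fun _ _ => Finset.sum_comm_cycle)
      _ = ((Fintype.card A : ℂ) • (Kᴴ * K)) x y := by
          conv_rhs => rw [Matrix.smul_apply, mul_apply, Fintype.sum_prod_type]
          simp only [K, F, conjTranspose_apply, of_apply, star_sum, Finset.sum_mul_sum,
            smul_eq_mul]
  rw [hK]
  exact (posSemidef_conjTranspose_mul_self K).smul (Nat.cast_nonneg _)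

lemma posSemidef_smul_applyRight_sub {R : Type*} [Fintype R] [Fintype B]
    {L L' : Matrix A A ℂ → Matrix B B ℂ} (hL : IsLinearMap ℂ L) (hL' : IsLinearMap ℂ L') {c : ℝ}
    (h : (c • choi L - choi L').PosSemidef) {ρ : Matrix (R × A) (R × A) ℂ} (hρ : ρ.PosSemidef) :
    (c • applyRight L ρ - applyRight L' ρ).PosSemidef := by
  let M := c • hL.mk' L - hL'.mk' L'
  have hchoi : choi M = c • choi L - choi L' := by
    ext x y
    simp only [M, choi, of_apply, Matrix.sub_apply, Matrix.smul_apply, LinearMap.sub_apply,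
      LinearMap.smul_apply, IsLinearMap.mk'_apply, Complex.real_smul]
    ring
  have happly : applyRight M ρ = c • applyRight L ρ - applyRight L' ρ := by
    ext x y
    simp only [M, applyRight, of_apply, Matrix.sub_apply, Matrix.smul_apply, LinearMap.sub_apply,
      LinearMap.smul_apply, IsLinearMap.mk'_apply]
  rw [← happly]
  exact posSemidef_applyRight M.isLinear (hchoi ▸ h) hρ

end Choi

section Separable

variable {A B : Type*} [Fintype A] [Fintype B]

lemma isState_inv_trace_smul {τ : Matrix A A ℂ} (hτ : τ.PosSemidef) (h : τ.trace ≠ 0) :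
    IsState (τ.trace⁻¹ • τ) :=
  ⟨hτ.smul (inv_nonneg_of_nonneg hτ.trace_nonneg),
    by rw [trace_smul, smul_eq_mul, inv_mul_cancel₀ h]⟩

lemma isSepState_sum_smul_kronecker {ι : Type*} [Fintype ι] {p : ι → ℝ} {τ₁ : ι → Matrix A A ℂ}
    {τ₂ : ι → Matrix B B ℂ} (hp : ∀ i, 0 ≤ p i) (hp1 : ∑ i, p i = 1) (h₁ : ∀ i, IsState (τ₁ i))
    (h₂ : ∀ i, IsState (τ₂ i)) : IsSepState (∑ i, (p i : ℂ) • (τ₁ i ⊗ₖ τ₂ i)) := by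
  let e := (Fintype.equivFin ι).symm
  refine ⟨Fintype.card ι, p ∘ e, τ₁ ∘ e, τ₂ ∘ e, fun _ => hp _, ?_, fun _ => h₁ _, fun _ => h₂ _,
    (e.sum_comp _).symm⟩
  rw [← hp1]
  exact e.sum_comp p

lemma isSepState_sum_kronecker {ι : Type*} [Fintype ι] {τ : ι → Matrix A A ℂ}
    {ω : ι → Matrix B B ℂ} (hτ : ∀ i, (τ i).PosSemidef) (htr : ∑ i, (τ i).trace = 1)
    (hω : ∀ i, IsState (ω i)) : IsSepState (∑ i, τ i ⊗ₖ ω i) := by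
  obtain ⟨i₀, -, hi₀⟩ := Finset.exists_ne_zero_of_sum_ne_zero (htr ▸ one_ne_zero)
  -- a block of trace zero vanishes and gets weight zero, so it may be replaced by `τ i₀`
  let τ' (i : ι) : Matrix A A ℂ := if (τ i).trace = 0 then τ i₀ else τ i
  have hτ' (i : ι) : (τ' i).PosSemidef ∧ (τ' i).trace ≠ 0 := by
    unfold τ'
    split_ifs with h
    exacts [⟨hτ i₀, hi₀⟩, ⟨hτ i, h⟩]
  have htrace_re (i : ι) : (((τ i).trace.re : ℝ) : ℂ) = (τ i).trace :=
    (Complex.eq_re_of_ofReal_le (r := 0) (by simpa using (hτ i).trace_nonneg)).symm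
  have hdecomp (i : ι) : τ i = (((τ i).trace.re : ℝ) : ℂ) • ((τ' i).trace⁻¹ • τ' i) := by
    rw [htrace_re]
    by_cases h : (τ i).trace = 0
    · rw [h, zero_smul, ← (hτ i).trace_eq_zero_iff, h]
    · simp only [τ', if_neg h, smul_smul, mul_inv_cancel₀ h, one_smul]
  have hsum : ∑ i, τ i ⊗ₖ ω i =
      ∑ i, (((τ i).trace.re : ℝ) : ℂ) • (((τ' i).trace⁻¹ • τ' i) ⊗ₖ ω i) :=
    Finset.sum_congr rfl fun i _ => by rw [← smul_kronecker, ← hdecomp]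
  rw [hsum]
  refine isSepState_sum_smul_kronecker (fun i => (Complex.nonneg_iff.mp (hτ i).trace_nonneg).1) ?_
    (fun i => isState_inv_trace_smul (hτ' i).1 (hτ' i).2) hω
  rw [← Complex.re_sum, htr, Complex.one_re]

end Separable

section Dephasing

variable {R A : Type*} [Fintype A] [DecidableEq A]

lemma isState_single (a : A) : IsState (single a a (1 : ℂ)) := by
  refine ⟨?_, trace_single_eq_same a 1⟩
  rw [← diagonal_single, posSemidef_diagonal_iff]
  intro i
  rw [Pi.single_apply]
  split_ifs <;> norm_num

lemma applyRight_diagonal_diag (ρ : Matrix (R × A) (R × A) ℂ) :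
    applyRight (fun X : Matrix A A ℂ => diagonal X.diag) ρ =
      ∑ a, ρ.submatrix (·, a) (·, a) ⊗ₖ single a a 1 := by
  ext x y
  simp only [applyRight, of_apply, diagonal_apply, diag_apply, Matrix.sum_apply,
    kroneckerMap_apply, submatrix_apply, single_apply]
  by_cases h : x.2 = y.2
  · simp [h]
  · simp only [if_neg h, mul_ite, mul_one, mul_zero]
    exact (Finset.sum_eq_zero fun c _ => if_neg fun hc : c = x.2 ∧ c = y.2 => h (hc.1 ▸ hc.2)).symm

lemma isSepState_applyRight_diagonal_diag [Fintype R] {ρ : Matrix (R × A) (R × A) ℂ}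
    (hρ : IsState ρ) : IsSepState (applyRight (fun X : Matrix A A ℂ => diagonal X.diag) ρ) := by
  rw [applyRight_diagonal_diag]
  refine isSepState_sum_kronecker (fun a => hρ.1.submatrix _) ?_ isState_single
  rw [← hρ.2, trace, Fintype.sum_prod_type_right]
  rfl

lemma choi_diagonal_diag_apply (x y : A × A) :
    choi (fun X : Matrix A A ℂ => diagonal X.diag) x y =
      if x.2 = x.1 ∧ y.2 = y.1 ∧ x.1 = y.1 then (Fintype.card A : ℂ)⁻¹ else 0 := by
  simp only [choi, of_apply, diagonal_apply, diag_apply, single_apply]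
  grind

end Dephasing

section Emax

variable {A B : Type*} [Fintype A] [Fintype B]

lemma dmax_le_logb {ρ σ : Matrix (A × B) (A × B) ℂ} {c : ℝ} (hc : 0 < c)
    (h : (c • σ - ρ).PosSemidef) : Dmax ρ σ ≤ (Real.logb 2 c : EReal) :=
  iInf_le (fun c : {c : ℝ // 0 < c ∧ (c • σ - ρ).PosSemidef} => ((Real.logb 2 c : ℝ) : EReal))
    ⟨c, hc, h⟩

lemma emaxState_le_dmax {ρ σ : Matrix (A × B) (A × B) ℂ} (hσ : IsSepState σ) :
    EmaxState ρ ≤ Dmax ρ σ :=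
  iInf_le (fun σ : {σ : Matrix (A × B) (A × B) ℂ // IsSepState σ} => Dmax ρ σ) ⟨σ, hσ⟩

end Emax

def blockDiagPart {n ι α : Type*} [DecidableEq ι] [Zero α] (f : n → ι) (M : Matrix n n α) :
    Matrix n n α :=
  of fun x y => if f x = f y then M x y else 0

lemma Matrix.PosSemidef.two_smul_blockDiagPart_sub {n : Type*} [Fintype n] {M : Matrix n n ℂ}
    (hM : M.PosSemidef) (f : n → Fin 2) : ((2 : ℝ) • blockDiagPart f M - M).PosSemidef := by
  let Z : Matrix n n ℂ := diagonal fun x => ![1, -1] (f x)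
  have hZ : Zᴴ * M * Z = (2 : ℝ) • blockDiagPart f M - M := by
    ext x y
    simp only [Z, diagonal_conjTranspose, diagonal_mul, mul_diagonal, blockDiagPart,
      Matrix.sub_apply, Matrix.smul_apply, of_apply, Pi.star_apply]
    generalize f x = a
    generalize f y = b
    fin_cases a <;> fin_cases b <;> simp <;> ring
  rw [← hZ]
  exact hM.conjTranspose_mul_mul_same Z

lemma fourierMat_apply (d : ℕ) (j k : Fin d) :
    fourierMat d j k =
      Complex.exp (2 * Real.pi * Complex.I / d) ^ (((j : ℕ) + 1) * ((k : ℕ) + 1)) / (√d : ℝ) := by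
  rw [fourierMat, of_apply, ← Complex.exp_nat_mul]
  congr 2
  push_cast
  ring

lemma fourierMat_conjTranspose_mul_self (d : ℕ) : (fourierMat d)ᴴ * fourierMat d = 1 := by
  rcases eq_or_ne d 0 with rfl | hd
  · exact Subsingleton.elim _ _
  set ζ := Complex.exp (2 * Real.pi * Complex.I / d)
  have hζ : IsPrimitiveRoot ζ d := Complex.isPrimitiveRoot_exp d hd
  have hζ0 : ζ ≠ 0 := hζ.ne_zero hd
  have hstar : star ζ = ζ⁻¹ := (Complex.inv_eq_conj (hζ.norm'_eq_one hd)).symm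
  have hsqrt : ((√d : ℝ) : ℂ) * ((√d : ℝ) : ℂ) = d := by
    rw [← Complex.ofReal_mul, Real.mul_self_sqrt (Nat.cast_nonneg d), Complex.ofReal_natCast]
  ext k i
  set η := ζ⁻¹ ^ ((k : ℕ) + 1) * ζ ^ ((i : ℕ) + 1) with hη_def
  have hterm (m : Fin d) : (fourierMat d)ᴴ k m * fourierMat d m i = η ^ ((m : ℕ) + 1) / d := by
    rw [conjTranspose_apply, fourierMat_apply, fourierMat_apply, star_div₀, star_pow, hstar,
      Complex.star_def, Complex.conj_ofReal, div_mul_div_comm, hsqrt, mul_pow, ← pow_mul,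
      ← pow_mul, mul_comm ((k : ℕ) + 1), mul_comm ((i : ℕ) + 1)]
  have hηd : η ^ d = 1 := by
    rw [mul_pow, ← pow_mul, ← pow_mul, inv_pow, mul_comm _ d, mul_comm _ d, pow_mul, pow_mul,
      hζ.pow_eq_one, one_pow, one_pow, inv_one, one_mul]
  rw [mul_apply, Finset.sum_congr rfl fun m _ => hterm m, ← Finset.sum_div,
    Fin.sum_univ_eq_sum_range (fun m => η ^ (m + 1)), one_apply]
  split_ifs with hki
  · have hη : η = 1 := by rw [hη_def, hki, ← mul_pow, inv_mul_cancel₀ hζ0, one_pow]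
    simp [hη, hd]
  · have hη : η ≠ 1 := by
      intro hη
      rw [hη_def, inv_pow, inv_mul_eq_one₀ (pow_ne_zero _ hζ0), pow_succ, pow_succ,
        mul_left_inj' hζ0] at hη
      exact hki (Fin.ext (hζ.pow_inj k.isLt i.isLt hη))
    simp only [pow_succ, ← Finset.sum_mul, geom_sum_eq hη, hηd, sub_self, zero_div, zero_mul]

section Flower

variable (d : ℕ)

lemma flowerU_conjTranspose_mul_self (l : Fin 2) : (flowerU d l)ᴴ * flowerU d l = 1 := by
  unfold flowerU
  split_ifs
  · simp
  · exact fourierMat_conjTranspose_mul_self d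

lemma flowerState_apply (x y : (Fin d × Fin 2) × (Fin d × Fin 2)) :
    flowerState d x y = if x.2 = x.1 ∧ y.2 = y.1 then
      1 / (2 * d) * ((flowerU d y.1.2)ᴴ * flowerU d x.1.2) y.1.1 x.1.1 else 0 := by
  simp only [flowerState, of_apply, Prod.ext_iff, and_assoc]

lemma flowerState_posSemidef : (flowerState d).PosSemidef := by
  let W : Matrix ((Fin d × Fin 2) × (Fin d × Fin 2)) (Fin d) ℂ :=
    of fun x m => if x.2 = x.1 then flowerU d x.1.2 m x.1.1 else 0
  have hW : flowerState d = (1 / (2 * d) : ℂ) • (W * Wᴴ) := by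
    ext x y
    rw [flowerState_apply]
    by_cases hx : x.2 = x.1 <;> by_cases hy : y.2 = y.1 <;>
      simp [W, hx, hy, mul_apply, mul_comm]
  rw [hW]
  exact (posSemidef_self_mul_conjTranspose W).smul (by positivity)

lemma ptraceSnd_flowerState :
    ptraceSnd (flowerState d) = (Fintype.card (Fin d × Fin 2) : ℂ)⁻¹ • 1 := by
  ext a a'
  simp only [ptraceSnd, of_apply, flowerState_apply]
  by_cases h : a = a'
  · subst h
    simp [flowerU_conjTranspose_mul_self, mul_comm]
  · rw [Finset.sum_eq_zero fun x _ => if_neg fun hx : x = a ∧ x = a' => h (hx.1 ▸ hx.2)]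
    simp [h]

lemma blockDiagPart_flowerState :
    blockDiagPart (fun x => x.1.2) (flowerState d) = choi fun X => diagonal X.diag := by
  ext ⟨⟨i, j⟩, b⟩ ⟨⟨k, l⟩, b'⟩
  rw [choi_diagonal_diag_apply, blockDiagPart, of_apply, flowerState_apply]
  by_cases hjl : j = l
  · subst hjl
    simp [flowerU_conjTranspose_mul_self, one_apply, Prod.ext_iff, eq_comm, mul_comm, ite_and]
  · simp [hjl]

end Flower

theorem flower_channel_bound_general
    (d : ℕ)
    (T : Matrix (Fin d × Fin 2) (Fin d × Fin 2) ℂ → Matrix (Fin d × Fin 2) (Fin d × Fin 2) ℂ)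
    (hlin : IsLinearMap ℂ T) (hchoi : choi T = flowerState d) :
    IsQChannel T ∧ EmaxChan T ≤ ((2 : ℝ) : EReal) := by
  let D := fun X : Matrix (Fin d × Fin 2) (Fin d × Fin 2) ℂ => diagonal X.diag
  have hD : IsLinearMap ℂ D := (diagonalLinearMap _ ℂ ℂ ∘ₗ diagLinearMap _ ℂ ℂ).isLinear
  have hle : ((2 : ℝ) • choi D - choi T).PosSemidef := by
    rw [hchoi, ← blockDiagPart_flowerState]
    exact (flowerState_posSemidef d).two_smul_blockDiagPart_sub _
  refine ⟨⟨hlin, trace_apply_of_ptraceSnd_choi hlin (hchoi ▸ ptraceSnd_flowerState d),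
    hchoi ▸ flowerState_posSemidef d⟩, iSup₂_le fun dR ρ => ?_⟩
  calc EmaxState (applyRight T ρ.1)
      ≤ Dmax (applyRight T ρ.1) (applyRight D ρ.1) :=
        emaxState_le_dmax (isSepState_applyRight_diagonal_diag ρ.2)
    _ ≤ (Real.logb 2 2 : ℝ) :=
        dmax_le_logb two_pos (posSemidef_smul_applyRight_sub hD hlin hle ρ.2.1)
    _ ≤ (2 : ℝ) := by
        rw [Real.logb_self_eq_one one_lt_two]
        exact EReal.coe_le_coe_iff.mpr one_le_two

/-- **Flower-channel bound**: the linear map `T_f` whose Choi matrix is the flower state `ρ^f`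
is a quantum channel with `E_max(T_f) ≤ 2`. -/
theorem flower_channel_bound
    (d : ℕ) (hd : 2 ≤ d)
    (T : Matrix (Fin d × Fin 2) (Fin d × Fin 2) ℂ → Matrix (Fin d × Fin 2) (Fin d × Fin 2) ℂ)
    (hlin : IsLinearMap ℂ T) (hchoi : choi T = flowerState d) :
    IsQChannel T ∧ EmaxChan T ≤ ((2 : ℝ) : EReal) :=
  flower_channel_bound_general d T hlin hchoi
end
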